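/- arXiv:2003.00694 — 2 statements merged into one kernel-verified Lean document; each statement's English description precedes it below -/
import Mathlib

section
/- Let N ≥ 2, let λ_1,…,λ_{N²−1} be N×N complex matrices that are Hermitian, traceless and satisfy Tr[λ_μ λ_ν] = 2δ_{μν}, and let x ∈ ℝ^{N²−1} be a unit vector. For real numbers r, s define ρ = (1/N)·I + (r/2)·Σ_μ x_μ λ_μ and ρ' = (1/N)·I + (s/2)·Σ_μ x_μ λ_μ. If both ρ and ρ' are positive semidefinite, then r·s ≥ −2/N. -/
open Matrix BigOperators
open scoped ComplexOrder

/-! The Hilbert–Schmidt product of two positive semidefinite matrices is nonnegative, and for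
states with Bloch vectors `r x` and `s x` the orthonormality of the generators gives
`Tr[ρ ρ'] = 1/N + r s/2`. -/

namespace Matrix

open scoped MatrixOrder in
theorem PosSemidef.trace_mul_nonneg {n 𝕜 : Type*} [Fintype n] [RCLike 𝕜]
    {A B : Matrix n n 𝕜} (hA : A.PosSemidef) (hB : B.PosSemidef) : 0 ≤ (A * B).trace := by
  classical
  set S := CFC.sqrt B
  have hS : Sᴴ = S := (CFC.sqrt_nonneg B).posSemidef.isHermitian
  calc 0 ≤ (S * A * Sᴴ).trace := (hA.mul_mul_conjTranspose_same S).trace_nonneg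
    _ = (A * B).trace := by
      rw [hS, trace_mul_cycle, CFC.sqrt_mul_sqrt_self B hB.nonneg, trace_mul_comm]

theorem trace_sum_smul_mul_sum_smul {ι n R : Type*} [Fintype ι] [DecidableEq ι] [Fintype n]
    [CommSemiring R] {lam : ι → Matrix n n R} {c : R}
    (horth : ∀ μ ν, (lam μ * lam ν).trace = if μ = ν then c else 0) (x y : ι → R) :
    ((∑ μ, x μ • lam μ) * ∑ ν, y ν • lam ν).trace = c * ∑ μ, x μ * y μ := by
  simp [Finset.sum_mul, Finset.mul_sum, trace_sum, smul_mul_smul_comm, trace_smul, horth, mul_comm]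

theorem trace_smul_one_add_smul_mul_smul_one_add_smul {n R : Type*} [Fintype n] [DecidableEq n]
    [CommRing R] {A : Matrix n n R} (hA : A.trace = 0) (a b c d : R) :
    ((a • 1 + b • A) * (c • 1 + d • A)).trace = Fintype.card n * (a * c) + b * d * (A * A).trace := by
  simp [add_mul, mul_add, trace_smul, hA]
  ring

end Matrix

theorem werner_lemma1_part1_general (N : ℕ) (hN : 2 ≤ N)
    (lam : Fin (N ^ 2 - 1) → Matrix (Fin N) (Fin N) ℂ)
    (htraceless : ∀ μ, (lam μ).trace = 0)
    (horth : ∀ μ ν, (lam μ * lam ν).trace = if μ = ν then 2 else 0)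
    (x : Fin (N ^ 2 - 1) → ℝ) (hx : ∑ μ, x μ ^ 2 = 1)
    (r s : ℝ)
    (hρ : (((1 : ℂ) / N) • (1 : Matrix (Fin N) (Fin N) ℂ) +
        ((r : ℂ) / 2) • ∑ μ, (x μ : ℂ) • lam μ).PosSemidef)
    (hρ' : (((1 : ℂ) / N) • (1 : Matrix (Fin N) (Fin N) ℂ) +
        ((s : ℂ) / 2) • ∑ μ, (x μ : ℂ) • lam μ).PosSemidef) :
    r * s ≥ -2 / N := by
  set A := ∑ μ, (x μ : ℂ) • lam μ
  have hN₀ : (0 : ℝ) < N := Nat.cast_pos.mpr (by omega)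
  have htrA : A.trace = 0 := by simp [A, trace_sum, trace_smul, htraceless]
  have htrAA : (A * A).trace = 2 := by
    rw [trace_sum_smul_mul_sum_smul horth]
    simp_rw [← sq]
    norm_cast
    rw [hx, mul_one]
  have htr : ((((1 : ℂ) / N) • 1 + ((r : ℂ) / 2) • A) *
      (((1 : ℂ) / N) • 1 + ((s : ℂ) / 2) • A)).trace = ((1 / N + r * s / 2 : ℝ) : ℂ) := by
    rw [trace_smul_one_add_smul_mul_smul_one_add_smul htrA, htrAA, Fintype.card_fin]
    push_cast
    field_simp
  have hnonneg : 0 ≤ 1 / (N : ℝ) + r * s / 2 := by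
    exact_mod_cast htr ▸ hρ.trace_mul_nonneg hρ'
  rw [ge_iff_le, div_le_iff₀ hN₀]
  nlinarith [mul_div_cancel₀ (1 : ℝ) hN₀.ne']

/-- For a generator family `lam` and a unit vector `x` in `ℝ^{N²-1}`,
if `ρ = (1/N)·I + (r/2)·x·λ` and `ρ' = (1/N)·I + (s/2)·x·λ` are both positive
semidefinite, then `r·s ≥ -2/N`. -/
theorem werner_lemma1_part1 (N : ℕ) (hN : 2 ≤ N)
    (lam : Fin (N ^ 2 - 1) → Matrix (Fin N) (Fin N) ℂ)
    (hherm : ∀ μ, (lam μ).IsHermitian)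
    (htraceless : ∀ μ, (lam μ).trace = 0)
    (horth : ∀ μ ν, (lam μ * lam ν).trace = if μ = ν then 2 else 0)
    (x : Fin (N ^ 2 - 1) → ℝ) (hx : ∑ μ, x μ ^ 2 = 1)
    (r s : ℝ)
    (hρ : (((1 : ℂ) / N) • (1 : Matrix (Fin N) (Fin N) ℂ) +
        ((r : ℂ) / 2) • ∑ μ, (x μ : ℂ) • lam μ).PosSemidef)
    (hρ' : (((1 : ℂ) / N) • (1 : Matrix (Fin N) (Fin N) ℂ) +
        ((s : ℂ) / 2) • ∑ μ, (x μ : ℂ) • lam μ).PosSemidef) :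
    r * s ≥ -2 / N :=
  werner_lemma1_part1_general N hN lam htraceless horth x hx r s hρ hρ'
end

section
/- Let N ≥ 2, let λ_1,…,λ_{N²−1} be N×N complex matrices that are Hermitian, traceless and satisfy Tr[λ_μ λ_ν] = 2δ_{μν}, and let a_1,…,a_{N²} be unit vectors in ℝ^{N²−1} with a_i · a_j = −1/(N²−1) for all i ≠ j. For real numbers r, s and each i define R_i(r) = (1/N)·I + (r/2)·Σ_μ (a_i)_μ λ_μ and S_i(s) = (1/N)·I + (s/2)·Σ_μ (a_i)_μ λ_μ. Then Σ_{i=1}^{N²} (1/N²)·R_i(r) ⊗ S_i(s) = (1/N²)·I⊗I + (r·s/(4(N²−1)))·Σ_{μ=1}^{N²−1} λ_μ ⊗ λ_μ, where ⊗ denotes the Kronecker product of matrices. -/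
/-!
By bilinearity of `⊗ₖ`, only two facts about a regular simplex `a₁, …, a_{m+1}` in `ℝᵐ` enter:
`∑ᵢ aᵢ = 0`, which kills the cross terms, and `∑ᵢ aᵢ aᵢᵀ = (1 + 1/m) I`, which turns
`∑ᵢ (∑_μ a_{iμ} λ_μ) ⊗ (∑_ν a_{iν} λ_ν)` into `(1 + 1/m) ∑_μ λ_μ ⊗ λ_μ`. Both are read off the
square matrix `[A | 𝟙]` whose rows are `(aᵢ, 1)`: the hypotheses say `A Aᵀ + (1/m) 𝟙𝟙ᵀ = (1 + 1/m) I`,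
and a one-sided inverse of a square matrix is two-sided, so also `[Aᵀ; (1/m) 𝟙ᵀ] [A | 𝟙] = (1 + 1/m) I`,
whose blocks are `AᵀA` and `𝟙ᵀA / m`.
-/

open Matrix BigOperators
open scoped Kronecker

namespace LinearMap

variable {R M P ι κ : Type*} [CommSemiring R] [AddCommMonoid M] [AddCommMonoid P]
  [Module R M] [Module R P] [Fintype ι] (B : M →ₗ[R] M →ₗ[R] P)

theorem sum_map₂_add_smul_of_sum_eq_zero (u : M) (w : ι → M) (r s : R)
    (hw : ∑ i, w i = 0) :
    ∑ i, B (u + r • w i) (u + s • w i) =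
      Fintype.card ι • B u u + (r * s) • ∑ i, B (w i) (w i) := by
  have hBw : ∑ i, B u (w i) = 0 := by rw [← map_sum, hw, map_zero]
  have hwB : ∑ i, B (w i) u = 0 := by rw [← sum_apply, ← map_sum, hw, map_zero, zero_apply]
  simp only [map_add, map_smul, add_apply, smul_apply, Finset.sum_add_distrib, ← Finset.smul_sum,
    hBw, hwB, smul_zero, add_zero, zero_add, Finset.sum_const, Finset.card_univ, smul_smul,
    mul_comm s r]

theorem sum_map₂_sum_smul_of_tight_frame [Fintype κ] [DecidableEq κ] (x : ι → κ → R) (v : κ → M)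
    (c : R) (hx : ∀ μ ν, ∑ i, x i μ * x i ν = if μ = ν then c else 0) :
    ∑ i, B (∑ μ, x i μ • v μ) (∑ ν, x i ν • v ν) = c • ∑ μ, B (v μ) (v μ) := by
  calc ∑ i, B (∑ μ, x i μ • v μ) (∑ ν, x i ν • v ν)
      = ∑ ν, ∑ μ, (∑ i, x i ν * x i μ) • B (v μ) (v ν) := by
        simp only [map_sum, map_smul, sum_apply, smul_apply, Finset.smul_sum, smul_smul,
          Finset.sum_smul]
        rw [Finset.sum_comm]
        exact Finset.sum_congr rfl fun ν _ => Finset.sum_comm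
    _ = c • ∑ μ, B (v μ) (v μ) := by
        simp only [hx, ite_smul, zero_smul, Finset.sum_ite_eq, Finset.mem_univ, if_true,
          Finset.smul_sum]

end LinearMap

theorem Matrix.mul_eq_smul_one_comm_of_equiv {m n K : Type*} [Fintype m] [Fintype n]
    [DecidableEq m] [DecidableEq n] [Field K] {A : Matrix m n K} {B : Matrix n m K} {c : K}
    (hc : c ≠ 0) (e : m ≃ n) : A * B = c • 1 ↔ B * A = c • 1 := by
  rw [← inv_smul_eq_iff₀ hc, ← inv_smul_eq_iff₀ hc, ← Matrix.mul_smul, ← Matrix.smul_mul,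
    mul_eq_one_comm_of_equiv e]

theorem Matrix.kroneckerBilinear_apply_apply {R α l m n p : Type*} [CommSemiring R] [Semiring α]
    [Algebra R α] (A : Matrix l m α) (B : Matrix n p α) : kroneckerBilinear (R := R) A B = A ⊗ₖ B :=
  rfl

structure IsRegularSimplex {ι κ : Type*} [Fintype ι] [Fintype κ] (a : ι → κ → ℝ) : Prop where
  card_eq : Fintype.card ι = Fintype.card κ + 1
  sum_sq : ∀ i, ∑ μ, a i μ ^ 2 = 1
  sum_mul : ∀ i j, i ≠ j → ∑ μ, a i μ * a j μ = -1 / Fintype.card κ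

namespace IsRegularSimplex

variable {ι κ : Type*} [Fintype ι] [Fintype κ] [DecidableEq ι] {a : ι → κ → ℝ}

theorem fromCols_mul_fromRows (ha : IsRegularSimplex a) :
    fromCols (of a) (of fun _ _ => 1 : Matrix ι Unit ℝ) *
        fromRows (of a)ᵀ (of fun _ _ => (Fintype.card κ : ℝ)⁻¹ : Matrix Unit ι ℝ) =
      (1 + (Fintype.card κ : ℝ)⁻¹) • 1 := by
  ext i j
  rcases eq_or_ne i j with rfl | hij
  · simp [mul_apply, ← sq, ha.sum_sq i]
  · simp [mul_apply, ha.sum_mul i j hij, hij]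
    ring

variable [DecidableEq κ]

theorem fromRows_mul_fromCols (ha : IsRegularSimplex a) :
    fromRows (of a)ᵀ (of fun _ _ => (Fintype.card κ : ℝ)⁻¹ : Matrix Unit ι ℝ) *
        fromCols (of a) (of fun _ _ => 1 : Matrix ι Unit ℝ) =
      (1 + (Fintype.card κ : ℝ)⁻¹) • 1 :=
  (mul_eq_smul_one_comm_of_equiv (by positivity)
    (Fintype.equivOfCardEq (by simp [ha.card_eq]))).mp ha.fromCols_mul_fromRows

theorem sum_mul_eq_ite (ha : IsRegularSimplex a) (μ ν : κ) :
    ∑ i, a i μ * a i ν = if μ = ν then 1 + (Fintype.card κ : ℝ)⁻¹ else 0 := by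
  simpa [Matrix.fromRows_mul_fromCols, mul_apply, one_apply] using
    congr_fun₂ ha.fromRows_mul_fromCols (Sum.inl μ) (Sum.inl ν)

theorem sum_eq_zero (ha : IsRegularSimplex a) (μ : κ) : ∑ i, a i μ = 0 := by
  have : Nonempty κ := ⟨μ⟩
  have hκ : (Fintype.card κ : ℝ) ≠ 0 := by positivity
  simpa [Matrix.fromRows_mul_fromCols, mul_apply, ← Finset.mul_sum, hκ] using
    congr_fun₂ ha.fromRows_mul_fromCols (Sum.inr ()) (Sum.inl μ)

end IsRegularSimplex

theorem werner_simplex_decomposition_general (N : ℕ) (hN : 2 ≤ N)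
    (lam : Fin (N ^ 2 - 1) → Matrix (Fin N) (Fin N) ℂ)
    (a : Fin (N ^ 2) → Fin (N ^ 2 - 1) → ℝ)
    (hunit : ∀ i, ∑ μ, a i μ ^ 2 = 1)
    (hangle : ∀ i j, i ≠ j → ∑ μ, a i μ * a j μ = -1 / ((N : ℝ) ^ 2 - 1))
    (r s : ℝ) :
    ∑ i, ((1 : ℂ) / N ^ 2) •
        ((((1 : ℂ) / N) • (1 : Matrix (Fin N) (Fin N) ℂ) +
            ((r : ℂ) / 2) • ∑ μ, (a i μ : ℂ) • lam μ) ⊗ₖ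
          (((1 : ℂ) / N) • (1 : Matrix (Fin N) (Fin N) ℂ) +
            ((s : ℂ) / 2) • ∑ μ, (a i μ : ℂ) • lam μ))
      = ((1 : ℂ) / N ^ 2) •
          ((1 : Matrix (Fin N) (Fin N) ℂ) ⊗ₖ (1 : Matrix (Fin N) (Fin N) ℂ)) +
        (((r : ℂ) * s) / (4 * ((N : ℂ) ^ 2 - 1))) • ∑ μ, lam μ ⊗ₖ lam μ := by
  have hsq : 4 ≤ N ^ 2 := by nlinarith
  have hcard : ((N ^ 2 - 1 : ℕ) : ℝ) = (N : ℝ) ^ 2 - 1 := by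
    push_cast [Nat.cast_sub (by omega : 1 ≤ N ^ 2)]; ring
  have ha : IsRegularSimplex a :=
    ⟨by simp only [Fintype.card_fin]; omega, hunit, by simpa [hcard] using hangle⟩
  have hframe : ∀ μ ν, ∑ i, (a i μ : ℂ) * a i ν =
      if μ = ν then 1 + ((N : ℂ) ^ 2 - 1)⁻¹ else 0 := fun μ ν => by
    have := congrArg ((↑) : ℝ → ℂ) (ha.sum_mul_eq_ite μ ν)
    rw [Fintype.card_fin, hcard] at this
    split_ifs at this ⊢ <;> push_cast at this <;> exact this
  have hcenter : ∑ i, ∑ μ, (a i μ : ℂ) • lam μ = 0 := by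
    rw [Finset.sum_comm]
    simp [← Finset.sum_smul, ha.sum_eq_zero]
  have hexpand := (kroneckerBilinear (R := ℂ)).sum_map₂_add_smul_of_sum_eq_zero
    (((1 : ℂ) / N) • (1 : Matrix (Fin N) (Fin N) ℂ)) _ ((r : ℂ) / 2) ((s : ℂ) / 2) hcenter
  rw [(kroneckerBilinear (R := ℂ)).sum_map₂_sum_smul_of_tight_frame _ lam _ hframe] at hexpand
  simp only [kroneckerBilinear_apply_apply] at hexpand
  rw [← Finset.smul_sum, hexpand, smul_kronecker, kronecker_smul, Fintype.card_fin,
    ← Nat.cast_smul_eq_nsmul ℂ, Nat.cast_pow, smul_add]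
  simp only [smul_smul]
  have hN0 : (N : ℂ) ≠ 0 := by exact_mod_cast (show N ≠ 0 by omega)
  have hN1 : (N : ℂ) ^ 2 - 1 ≠ 0 := sub_ne_zero.mpr (by exact_mod_cast (show N ^ 2 ≠ 1 by omega))
  congr 2
  · field_simp
  · field_simp
    ring

/-- Decomposition of the Werner state in Bloch representation
by an arbitrary regular simplex `a_1, …, a_{N²}` in `ℝ^{N²-1}`:
`Σ_i (1/N²) R_i(r) ⊗ S_i(s) = (1/N²) I⊗I + (rs/(4(N²-1))) Σ_μ λ_μ ⊗ λ_μ`. -/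
theorem werner_simplex_decomposition (N : ℕ) (hN : 2 ≤ N)
    (lam : Fin (N ^ 2 - 1) → Matrix (Fin N) (Fin N) ℂ)
    (hherm : ∀ μ, (lam μ).IsHermitian)
    (htraceless : ∀ μ, (lam μ).trace = 0)
    (horth : ∀ μ ν, (lam μ * lam ν).trace = if μ = ν then 2 else 0)
    (a : Fin (N ^ 2) → Fin (N ^ 2 - 1) → ℝ)
    (hunit : ∀ i, ∑ μ, a i μ ^ 2 = 1)
    (hangle : ∀ i j, i ≠ j → ∑ μ, a i μ * a j μ = -1 / ((N : ℝ) ^ 2 - 1))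
    (r s : ℝ) :
    ∑ i, ((1 : ℂ) / N ^ 2) •
        ((((1 : ℂ) / N) • (1 : Matrix (Fin N) (Fin N) ℂ) +
            ((r : ℂ) / 2) • ∑ μ, (a i μ : ℂ) • lam μ) ⊗ₖ
          (((1 : ℂ) / N) • (1 : Matrix (Fin N) (Fin N) ℂ) +
            ((s : ℂ) / 2) • ∑ μ, (a i μ : ℂ) • lam μ))
      = ((1 : ℂ) / N ^ 2) •
          ((1 : Matrix (Fin N) (Fin N) ℂ) ⊗ₖ (1 : Matrix (Fin N) (Fin N) ℂ)) +
        (((r : ℂ) * s) / (4 * ((N : ℂ) ^ 2 - 1))) • ∑ μ, lam μ ⊗ₖ lam μ :=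
  werner_simplex_decomposition_general N hN lam a hunit hangle r s
end
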